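/- Let X be the 3-dimensional Banach space whose unit ball is the polyhedron with vertices ±(1,1,1), ±(−1,1,1), ±(−1,−1,1), ±(1,−1,1), ±(0,0,2) (two pyramids glued to opposite square faces of a right square prism). Then the numerical index of X equals 1/2. -/

import Mathlib

open Metric Set

/-- The numerical radius of a bounded linear operator. -/
noncomputable def nrad {X : Type*} [NormedAddCommGroup X] [NormedSpace ℝ X]
    (T : X →L[ℝ] X) : ℝ :=
  sSup {r : ℝ | ∃ x : X, ∃ f : X →L[ℝ] ℝ, ‖x‖ = 1 ∧ ‖f‖ = 1 ∧ f x = 1 ∧ r = |f (T x)|}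

/-- The numerical index of a normed space. -/
noncomputable def nindex (X : Type*) [NormedAddCommGroup X] [NormedSpace ℝ X] : ℝ :=
  sInf {r : ℝ | ∃ T : X →L[ℝ] X, ‖T‖ = 1 ∧ r = nrad T}

/-- The ten vertices ±(1,1,1), ±(−1,1,1), ±(−1,−1,1), ±(1,−1,1), ±(0,0,2). -/
def biPyramidVerts : Set (Fin 3 → ℝ) :=
  {![1,1,1], ![-1,1,1], ![-1,-1,1], ![1,-1,1], ![0,0,2],
   ![-1,-1,-1], ![1,-1,-1], ![1,1,-1], ![-1,1,-1], ![0,0,-2]}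

namespace S11

attribute [local simp] Matrix.cons_val_two

noncomputable def gLin (g : Fin 3 → ℝ) : (Fin 3 → ℝ) →ₗ[ℝ] ℝ :=
  g 0 • (LinearMap.proj 0) + g 1 • (LinearMap.proj 1) + g 2 • (LinearMap.proj 2)

@[simp] lemma gLin_apply (g w : Fin 3 → ℝ) :
    gLin g w = g 0 * w 0 + g 1 * w 1 + g 2 * w 2 := by
  simp [gLin, smul_eq_mul]



lemma lin_expand (c : (Fin 3 → ℝ) →ₗ[ℝ] ℝ) (w : Fin 3 → ℝ) :
    c w = w 0 * c ![1,0,0] + w 1 * c ![0,1,0] + w 2 * c ![0,0,1] := by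
  have hw : w = w 0 • ![1,0,0] + w 1 • ![0,1,0] + w 2 • ![0,0,1] := by
    funext i; fin_cases i <;> simp
  nth_rewrite 1 [hw]
  rw [map_add, map_add, map_smul, map_smul, map_smul, smul_eq_mul, smul_eq_mul, smul_eq_mul]

lemma mem_verts_cases {q : Fin 3 → ℝ} (hq : q ∈ biPyramidVerts) :
    q = ![1,1,1] ∨ q = ![-1,1,1] ∨ q = ![-1,-1,1] ∨ q = ![1,-1,1] ∨ q = ![0,0,2] ∨
    q = ![-1,-1,-1] ∨ q = ![1,-1,-1] ∨ q = ![1,1,-1] ∨ q = ![-1,1,-1] ∨ q = ![0,0,-2] := by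
  simpa [biPyramidVerts] using hq

variable {X : Type*} [NormedAddCommGroup X] [NormedSpace ℝ X] [FiniteDimensional ℝ X]
  (e : X ≃ₗ[ℝ] (Fin 3 → ℝ))

lemma norm_le_iff (hball : closedBall (0 : X) 1 = e ⁻¹' (convexHull ℝ biPyramidVerts))
    (x : X) : ‖x‖ ≤ 1 ↔ e x ∈ convexHull ℝ biPyramidVerts := by
  rw [← mem_closedBall_zero_iff, hball]; rfl

lemma hull_dual_bound {g : Fin 3 → ℝ} (hg : ∀ q ∈ biPyramidVerts, |gLin g q| ≤ 1)
    {w : Fin 3 → ℝ} (hw : w ∈ convexHull ℝ biPyramidVerts) : |gLin g w| ≤ 1 := by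
  have hconv : Convex ℝ {w : Fin 3 → ℝ | |gLin g w| ≤ 1} := by
    have hset : {w : Fin 3 → ℝ | |gLin g w| ≤ 1}
        = {w | gLin g w ≤ 1} ∩ {w | (-1 : ℝ) ≤ gLin g w} := by
      ext v; simp [abs_le, and_comm]
    rw [hset]
    exact (convex_halfSpace_le (gLin g).isLinear 1).inter
      (convex_halfSpace_ge (gLin g).isLinear (-1))
  exact convexHull_min (fun q hq => hg q hq) hconv hw

noncomputable def Gf (g : Fin 3 → ℝ) : X →L[ℝ] ℝ :=
  LinearMap.toContinuousLinearMap ((gLin g).comp (e : X →ₗ[ℝ] Fin 3 → ℝ))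

@[simp] lemma Gf_apply (g : Fin 3 → ℝ) (x : X) : Gf e g x = gLin g (e x) := rfl

lemma Gf_norm_le (hball : closedBall (0 : X) 1 = e ⁻¹' (convexHull ℝ biPyramidVerts))
    {g : Fin 3 → ℝ} (hg : ∀ q ∈ biPyramidVerts, |gLin g q| ≤ 1) : ‖Gf e g‖ ≤ 1 := by
  apply ContinuousLinearMap.opNorm_le_of_unit_norm (by norm_num)
  intro x hx
  have := hull_dual_bound hg ((norm_le_iff e hball x).1 hx.le)
  simpa [Real.norm_eq_abs] using this

lemma unit_of (hball : closedBall (0 : X) 1 = e ⁻¹' (convexHull ℝ biPyramidVerts))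
    {p g : Fin 3 → ℝ} (hp : p ∈ convexHull ℝ biPyramidVerts)
    (hg : ∀ q ∈ biPyramidVerts, |gLin g q| ≤ 1) (hgp : |gLin g p| = 1) :
    ‖e.symm p‖ = 1 := by
  have hle : ‖e.symm p‖ ≤ 1 := by
    rw [norm_le_iff e hball]; simpa using hp
  refine le_antisymm hle ?_
  have h1 : (1 : ℝ) = |Gf e g (e.symm p)| := by simp [hgp.symm]
  have h2 : |Gf e g (e.symm p)| ≤ ‖Gf e g‖ * ‖e.symm p‖ := by
    simpa [Real.norm_eq_abs] using (Gf e g).le_opNorm (e.symm p)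
  have h3 : ‖Gf e g‖ ≤ 1 := Gf_norm_le e hball hg
  nlinarith [norm_nonneg (e.symm p), norm_nonneg (Gf e g)]

lemma bddAbove_nradSet (T : X →L[ℝ] X) :
    BddAbove {r : ℝ | ∃ x : X, ∃ f : X →L[ℝ] ℝ, ‖x‖ = 1 ∧ ‖f‖ = 1 ∧ f x = 1 ∧ r = |f (T x)|} := by
  refine ⟨‖T‖, ?_⟩
  rintro r ⟨x, f, hx, hf, hfx, rfl⟩
  calc |f (T x)| = ‖f (T x)‖ := (Real.norm_eq_abs _).symm
    _ ≤ ‖f‖ * ‖T x‖ := f.le_opNorm _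
    _ ≤ ‖f‖ * (‖T‖ * ‖x‖) := by
        exact mul_le_mul_of_nonneg_left (T.le_opNorm x) (norm_nonneg f)
    _ = ‖T‖ := by rw [hf, hx]; ring

lemma le_nrad (T : X →L[ℝ] X) {x : X} {f : X →L[ℝ] ℝ}
    (hx : ‖x‖ = 1) (hf : ‖f‖ = 1) (hfx : f x = 1) : |f (T x)| ≤ nrad T :=
  le_csSup (bddAbove_nradSet T) ⟨x, f, hx, hf, hfx, rfl⟩

lemma pair_bound (hball : closedBall (0 : X) 1 = e ⁻¹' (convexHull ℝ biPyramidVerts))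
    (T : X →L[ℝ] X) {p g : Fin 3 → ℝ}
    (hp : p ∈ convexHull ℝ biPyramidVerts)
    (hg : ∀ q ∈ biPyramidVerts, |gLin g q| ≤ 1)
    (hgp : gLin g p = 1 ∨ gLin g p = -1) :
    |gLin g (e (T (e.symm p)))| ≤ nrad T := by
  have hpn : ‖e.symm p‖ = 1 := by
    refine unit_of e hball hp hg ?_
    rcases hgp with h | h <;> rw [h] <;> norm_num
  have hGle : ‖Gf e g‖ ≤ 1 := Gf_norm_le e hball hg
  have hGge : (1 : ℝ) ≤ ‖Gf e g‖ := by
    have h2 : |Gf e g (e.symm p)| ≤ ‖Gf e g‖ * ‖e.symm p‖ := by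
      simpa [Real.norm_eq_abs] using (Gf e g).le_opNorm (e.symm p)
    have h1 : |Gf e g (e.symm p)| = 1 := by
      rcases hgp with h | h <;> simp [h]
    rw [hpn, mul_one] at h2; linarith
  have hGn : ‖Gf e g‖ = 1 := le_antisymm hGle hGge
  rcases hgp with h | h
  · have := le_nrad T (f := Gf e g) hpn hGn (by simp [h])
    simpa using this
  · have hfn : ‖-Gf e g‖ = 1 := by rwa [norm_neg]
    have := le_nrad T (f := -(Gf e g)) hpn hfn (by simp [h])
    have h2 : ((-(Gf e g)) (T (e.symm p))) = -(gLin g (e (T (e.symm p)))) := by simp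
    rw [h2, abs_neg] at this
    simpa using this


lemma v1_mem : (![1,1,1] : Fin 3 → ℝ) ∈ convexHull ℝ biPyramidVerts :=
  subset_convexHull ℝ _ (by simp [biPyramidVerts])

lemma nrad_nonneg (hball : closedBall (0 : X) 1 = e ⁻¹' (convexHull ℝ biPyramidVerts))
    (T : X →L[ℝ] X) : 0 ≤ nrad T := by
  have hb : ∀ q ∈ biPyramidVerts, |gLin ![(1:ℝ),0,0] q| ≤ 1 := by
    intro q hq
    rcases (show q = ![1,1,1] ∨ q = ![-1,1,1] ∨ q = ![-1,-1,1] ∨ q = ![1,-1,1] ∨ q = ![0,0,2] ∨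
      q = ![-1,-1,-1] ∨ q = ![1,-1,-1] ∨ q = ![1,1,-1] ∨ q = ![-1,1,-1] ∨ q = ![0,0,-2] by
        simpa [biPyramidVerts] using hq) with rfl|rfl|rfl|rfl|rfl|rfl|rfl|rfl|rfl|rfl <;> norm_num
  have := pair_bound e hball T (p := ![1,1,1]) (g := ![1,0,0]) (v1_mem) hb (by norm_num)
  exact le_trans (abs_nonneg _) this

lemma comb2 (T : X →L[ℝ] X) {g u p q : Fin 3 → ℝ} {c d : ℝ}
    (ht0 : 0 ≤ nrad T)
    (hu : u = c • p + d • q)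
    (h1 : |gLin g (e (T (e.symm p)))| ≤ nrad T)
    (h2 : |gLin g (e (T (e.symm q)))| ≤ nrad T)
    (hcd : |c| + |d| ≤ 2) :
    |gLin g (e (T (e.symm u)))| ≤ 2 * nrad T := by
  have he : e (T (e.symm u)) = c • e (T (e.symm p)) + d • e (T (e.symm q)) := by
    rw [hu]; simp
  rw [he, map_add, map_smul, map_smul, smul_eq_mul, smul_eq_mul]
  have habs : |c * gLin g (e (T (e.symm p))) + d * gLin g (e (T (e.symm q)))|
      ≤ |c| * |gLin g (e (T (e.symm p)))| + |d| * |gLin g (e (T (e.symm q)))| :=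
    (abs_add_le _ _).trans (by rw [abs_mul, abs_mul])
  nlinarith [abs_nonneg c, abs_nonneg d, abs_nonneg (gLin g (e (T (e.symm p)))),
    abs_nonneg (gLin g (e (T (e.symm q)))),
    mul_le_mul_of_nonneg_left h1 (abs_nonneg c),
    mul_le_mul_of_nonneg_left h2 (abs_nonneg d),
    mul_le_mul_of_nonneg_right hcd ht0]

lemma vmem (p : Fin 3 → ℝ) (hp : p ∈ biPyramidVerts) : p ∈ convexHull ℝ biPyramidVerts :=
  subset_convexHull ℝ _ hp

lemma mid_mem {p q m : Fin 3 → ℝ} (hp : p ∈ biPyramidVerts) (hq : q ∈ biPyramidVerts)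
    (hm : m = (1/2 : ℝ) • p + (1/2 : ℝ) • q) : m ∈ convexHull ℝ biPyramidVerts := by
  rw [hm]
  exact (convex_convexHull ℝ biPyramidVerts) (vmem p hp) (vmem q hq)
    (by norm_num) (by norm_num) (by norm_num)

lemma mem_v1 : (![1,1,1] : Fin 3 → ℝ) ∈ convexHull ℝ biPyramidVerts := vmem _ (by simp [biPyramidVerts])

lemma mem_v2 : (![-1,1,1] : Fin 3 → ℝ) ∈ convexHull ℝ biPyramidVerts := vmem _ (by simp [biPyramidVerts])

lemma mem_v3 : (![-1,-1,1] : Fin 3 → ℝ) ∈ convexHull ℝ biPyramidVerts := vmem _ (by simp [biPyramidVerts])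

lemma mem_v4 : (![1,-1,1] : Fin 3 → ℝ) ∈ convexHull ℝ biPyramidVerts := vmem _ (by simp [biPyramidVerts])

lemma mem_v5 : (![0,0,2] : Fin 3 → ℝ) ∈ convexHull ℝ biPyramidVerts := vmem _ (by simp [biPyramidVerts])

lemma mem_m1 : (![1,0,1] : Fin 3 → ℝ) ∈ convexHull ℝ biPyramidVerts :=
  mid_mem (p := ![1,1,1]) (q := ![1,-1,1]) (by simp [biPyramidVerts]) (by simp [biPyramidVerts])
    (by funext i; fin_cases i <;> norm_num)

lemma mem_m2 : (![-1,0,1] : Fin 3 → ℝ) ∈ convexHull ℝ biPyramidVerts :=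
  mid_mem (p := ![-1,1,1]) (q := ![-1,-1,1]) (by simp [biPyramidVerts]) (by simp [biPyramidVerts])
    (by funext i; fin_cases i <;> norm_num)

lemma mem_m3 : (![0,1,1] : Fin 3 → ℝ) ∈ convexHull ℝ biPyramidVerts :=
  mid_mem (p := ![1,1,1]) (q := ![-1,1,1]) (by simp [biPyramidVerts]) (by simp [biPyramidVerts])
    (by funext i; fin_cases i <;> norm_num)

lemma mem_m4 : (![0,-1,1] : Fin 3 → ℝ) ∈ convexHull ℝ biPyramidVerts :=
  mid_mem (p := ![-1,-1,1]) (q := ![1,-1,1]) (by simp [biPyramidVerts]) (by simp [biPyramidVerts])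
    (by funext i; fin_cases i <;> norm_num)

lemma gb_ga : ∀ q ∈ biPyramidVerts, |gLin ![1,0,0] q| ≤ 1 := by
  intro q hq
  rcases mem_verts_cases hq with rfl|rfl|rfl|rfl|rfl|rfl|rfl|rfl|rfl|rfl <;> norm_num

lemma gb_gb : ∀ q ∈ biPyramidVerts, |gLin ![0,1,0] q| ≤ 1 := by
  intro q hq
  rcases mem_verts_cases hq with rfl|rfl|rfl|rfl|rfl|rfl|rfl|rfl|rfl|rfl <;> norm_num

lemma gb_gc : ∀ q ∈ biPyramidVerts, |gLin ![1/2,0,1/2] q| ≤ 1 := by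
  intro q hq
  rcases mem_verts_cases hq with rfl|rfl|rfl|rfl|rfl|rfl|rfl|rfl|rfl|rfl <;> norm_num

lemma gb_gd : ∀ q ∈ biPyramidVerts, |gLin ![1/2,0,-1/2] q| ≤ 1 := by
  intro q hq
  rcases mem_verts_cases hq with rfl|rfl|rfl|rfl|rfl|rfl|rfl|rfl|rfl|rfl <;> norm_num

lemma gb_ge : ∀ q ∈ biPyramidVerts, |gLin ![0,1/2,1/2] q| ≤ 1 := by
  intro q hq
  rcases mem_verts_cases hq with rfl|rfl|rfl|rfl|rfl|rfl|rfl|rfl|rfl|rfl <;> norm_num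

lemma gb_gf : ∀ q ∈ biPyramidVerts, |gLin ![0,1/2,-1/2] q| ≤ 1 := by
  intro q hq
  rcases mem_verts_cases hq with rfl|rfl|rfl|rfl|rfl|rfl|rfl|rfl|rfl|rfl <;> norm_num

lemma pos_bounds (hball : closedBall (0 : X) 1 = e ⁻¹' (convexHull ℝ biPyramidVerts))
    (T : X →L[ℝ] X) (ht0 : 0 ≤ nrad T) :
    ∀ g ∈ ({![1,0,0], ![0,1,0], ![1/2,0,1/2], ![1/2,0,-1/2], ![0,1/2,1/2], ![0,1/2,-1/2]} :
      Set (Fin 3 → ℝ)),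
    ∀ u ∈ ({![1,1,1], ![-1,1,1], ![-1,-1,1], ![1,-1,1], ![0,0,2]} : Set (Fin 3 → ℝ)),
    |gLin g (e (T (e.symm u)))| ≤ 2 * nrad T := by
  intro g hg u hu
  simp only [Set.mem_insert_iff, Set.mem_singleton_iff] at hg hu
  rcases hg with rfl|rfl|rfl|rfl|rfl|rfl
  · rcases hu with rfl|rfl|rfl|rfl|rfl
    · have hb := pair_bound e hball T mem_v1 gb_ga (Or.inl (by norm_num))
      linarith
    · have hb := pair_bound e hball T mem_v2 gb_ga (Or.inr (by norm_num))
      linarith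
    · have hb := pair_bound e hball T mem_v3 gb_ga (Or.inr (by norm_num))
      linarith
    · have hb := pair_bound e hball T mem_v4 gb_ga (Or.inl (by norm_num))
      linarith
    · refine comb2 e T ht0 (c := 1) (d := 1) (p := ![1,0,1]) (q := ![-1,0,1])
        (by funext i; fin_cases i <;> norm_num)
        (pair_bound e hball T mem_m1 gb_ga (by norm_num))
        (pair_bound e hball T mem_m2 gb_ga (by norm_num)) (by norm_num)
  · rcases hu with rfl|rfl|rfl|rfl|rfl
    · have hb := pair_bound e hball T mem_v1 gb_gb (Or.inl (by norm_num))
      linarith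
    · have hb := pair_bound e hball T mem_v2 gb_gb (Or.inl (by norm_num))
      linarith
    · have hb := pair_bound e hball T mem_v3 gb_gb (Or.inr (by norm_num))
      linarith
    · have hb := pair_bound e hball T mem_v4 gb_gb (Or.inr (by norm_num))
      linarith
    · refine comb2 e T ht0 (c := 1) (d := 1) (p := ![0,1,1]) (q := ![0,-1,1])
        (by funext i; fin_cases i <;> norm_num)
        (pair_bound e hball T mem_m3 gb_gb (by norm_num))
        (pair_bound e hball T mem_m4 gb_gb (by norm_num)) (by norm_num)
  · rcases hu with rfl|rfl|rfl|rfl|rfl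
    · have hb := pair_bound e hball T mem_v1 gb_gc (Or.inl (by norm_num))
      linarith
    · refine comb2 e T ht0 (c := 1) (d := -1) (p := ![0,0,2]) (q := ![1,-1,1])
        (by funext i; fin_cases i <;> norm_num)
        (pair_bound e hball T mem_v5 gb_gc (by norm_num))
        (pair_bound e hball T mem_v4 gb_gc (by norm_num)) (by norm_num)
    · refine comb2 e T ht0 (c := 1) (d := -1) (p := ![0,0,2]) (q := ![1,1,1])
        (by funext i; fin_cases i <;> norm_num)
        (pair_bound e hball T mem_v5 gb_gc (by norm_num))
        (pair_bound e hball T mem_v1 gb_gc (by norm_num)) (by norm_num)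
    · have hb := pair_bound e hball T mem_v4 gb_gc (Or.inl (by norm_num))
      linarith
    · have hb := pair_bound e hball T mem_v5 gb_gc (Or.inl (by norm_num))
      linarith
  · rcases hu with rfl|rfl|rfl|rfl|rfl
    · refine comb2 e T ht0 (c := 1) (d := -1) (p := ![0,0,2]) (q := ![-1,-1,1])
        (by funext i; fin_cases i <;> norm_num)
        (pair_bound e hball T mem_v5 gb_gd (by norm_num))
        (pair_bound e hball T mem_v3 gb_gd (by norm_num)) (by norm_num)
    · have hb := pair_bound e hball T mem_v2 gb_gd (Or.inr (by norm_num))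
      linarith
    · have hb := pair_bound e hball T mem_v3 gb_gd (Or.inr (by norm_num))
      linarith
    · refine comb2 e T ht0 (c := 1) (d := -1) (p := ![0,0,2]) (q := ![-1,1,1])
        (by funext i; fin_cases i <;> norm_num)
        (pair_bound e hball T mem_v5 gb_gd (by norm_num))
        (pair_bound e hball T mem_v2 gb_gd (by norm_num)) (by norm_num)
    · have hb := pair_bound e hball T mem_v5 gb_gd (Or.inr (by norm_num))
      linarith
  · rcases hu with rfl|rfl|rfl|rfl|rfl
    · have hb := pair_bound e hball T mem_v1 gb_ge (Or.inl (by norm_num))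
      linarith
    · have hb := pair_bound e hball T mem_v2 gb_ge (Or.inl (by norm_num))
      linarith
    · refine comb2 e T ht0 (c := 1) (d := -1) (p := ![0,0,2]) (q := ![1,1,1])
        (by funext i; fin_cases i <;> norm_num)
        (pair_bound e hball T mem_v5 gb_ge (by norm_num))
        (pair_bound e hball T mem_v1 gb_ge (by norm_num)) (by norm_num)
    · refine comb2 e T ht0 (c := 1) (d := -1) (p := ![0,0,2]) (q := ![-1,1,1])
        (by funext i; fin_cases i <;> norm_num)
        (pair_bound e hball T mem_v5 gb_ge (by norm_num))
        (pair_bound e hball T mem_v2 gb_ge (by norm_num)) (by norm_num)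
    · have hb := pair_bound e hball T mem_v5 gb_ge (Or.inl (by norm_num))
      linarith
  · rcases hu with rfl|rfl|rfl|rfl|rfl
    · refine comb2 e T ht0 (c := 1) (d := -1) (p := ![0,0,2]) (q := ![-1,-1,1])
        (by funext i; fin_cases i <;> norm_num)
        (pair_bound e hball T mem_v5 gb_gf (by norm_num))
        (pair_bound e hball T mem_v3 gb_gf (by norm_num)) (by norm_num)
    · refine comb2 e T ht0 (c := 1) (d := -1) (p := ![0,0,2]) (q := ![1,-1,1])
        (by funext i; fin_cases i <;> norm_num)
        (pair_bound e hball T mem_v5 gb_gf (by norm_num))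
        (pair_bound e hball T mem_v4 gb_gf (by norm_num)) (by norm_num)
    · have hb := pair_bound e hball T mem_v3 gb_gf (Or.inr (by norm_num))
      linarith
    · have hb := pair_bound e hball T mem_v4 gb_gf (Or.inr (by norm_num))
      linarith
    · have hb := pair_bound e hball T mem_v5 gb_gf (Or.inr (by norm_num))
      linarith

lemma neg_reduce (T : X →L[ℝ] X) (g u : Fin 3 → ℝ) :
    |gLin g (e (T (e.symm (-u))))| = |gLin g (e (T (e.symm u)))| := by
  have h : e (T (e.symm (-u))) = -(e (T (e.symm u))) := by simp
  rw [h, map_neg, abs_neg]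

lemma key_bounds (hball : closedBall (0 : X) 1 = e ⁻¹' (convexHull ℝ biPyramidVerts))
    (T : X →L[ℝ] X) (ht0 : 0 ≤ nrad T) :
    ∀ u ∈ biPyramidVerts,
    ∀ g ∈ ({![1,0,0], ![0,1,0], ![1/2,0,1/2], ![1/2,0,-1/2], ![0,1/2,1/2], ![0,1/2,-1/2]} :
      Set (Fin 3 → ℝ)),
    |gLin g (e (T (e.symm u)))| ≤ 2 * nrad T := by
  intro u hu g hg
  have hpos := pos_bounds e hball T ht0 g hg
  have hmem : ∀ v ∈ ({![1,1,1], ![-1,1,1], ![-1,-1,1], ![1,-1,1], ![0,0,2]} :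
      Set (Fin 3 → ℝ)), True := fun _ _ => trivial
  rcases mem_verts_cases hu with rfl|rfl|rfl|rfl|rfl|rfl|rfl|rfl|rfl|rfl
  · exact hpos _ (by simp)
  · exact hpos _ (by simp)
  · exact hpos _ (by simp)
  · exact hpos _ (by simp)
  · exact hpos _ (by simp)
  · rw [show (![-1,-1,-1] : Fin 3 → ℝ) = -![1,1,1] by funext i; fin_cases i <;> norm_num,
      neg_reduce]
    exact hpos _ (by simp)
  · rw [show (![1,-1,-1] : Fin 3 → ℝ) = -![-1,1,1] by funext i; fin_cases i <;> norm_num,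
      neg_reduce]
    exact hpos _ (by simp)
  · rw [show (![1,1,-1] : Fin 3 → ℝ) = -![-1,-1,1] by funext i; fin_cases i <;> norm_num,
      neg_reduce]
    exact hpos _ (by simp)
  · rw [show (![-1,1,-1] : Fin 3 → ℝ) = -![1,-1,1] by funext i; fin_cases i <;> norm_num,
      neg_reduce]
    exact hpos _ (by simp)
  · rw [show (![0,0,-2] : Fin 3 → ℝ) = -![0,0,2] by funext i; fin_cases i <;> norm_num,
      neg_reduce]
    exact hpos _ (by simp)


lemma arith_key {a b c x0 x1 x2 M : ℝ}
    (h1 : |a + b + c| ≤ 1) (h2 : |a - b + c| ≤ 1) (h3 : |-a + b + c| ≤ 1)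
    (h4 : |-a - b + c| ≤ 1) (h5 : |2*c| ≤ 1)
    (k1 : |x0| ≤ M) (k2 : |x1| ≤ M)
    (k3 : |x0 + x2| ≤ 2*M) (k4 : |x0 - x2| ≤ 2*M)
    (k5 : |x1 + x2| ≤ 2*M) (k6 : |x1 - x2| ≤ 2*M) :
    a * x0 + b * x1 + c * x2 ≤ M := by
  have hA : (0:ℝ) ≤ |a| := abs_nonneg a
  have hB : (0:ℝ) ≤ |b| := abs_nonneg b
  have hC : (0:ℝ) ≤ |c| := abs_nonneg c
  have hM0 : 0 ≤ M := le_trans (abs_nonneg x0) k1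
  have hABC : |a| + |b| + |c| ≤ 1 := by
    rcases abs_cases a with ⟨ha, _⟩ | ⟨ha, _⟩ <;> rcases abs_cases b with ⟨hb, _⟩ | ⟨hb, _⟩ <;>
      rcases abs_cases c with ⟨hc, _⟩ | ⟨hc, _⟩ <;>
      rw [ha, hb, hc] <;>
      linarith [(abs_le.1 h1).1, (abs_le.1 h1).2, (abs_le.1 h2).1, (abs_le.1 h2).2,
        (abs_le.1 h3).1, (abs_le.1 h3).2, (abs_le.1 h4).1, (abs_le.1 h4).2]
  have h2C : 2 * |c| ≤ 1 := by
    have : |2*c| = 2 * |c| := by rw [abs_mul]; norm_num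
    linarith [h5, this.symm.le, this.le]
  have hxz : |x0| + |x2| ≤ 2*M := by
    rcases abs_cases x0 with ⟨hx, _⟩ | ⟨hx, _⟩ <;> rcases abs_cases x2 with ⟨hz, _⟩ | ⟨hz, _⟩ <;>
      rw [hx, hz] <;>
      linarith [(abs_le.1 k3).1, (abs_le.1 k3).2, (abs_le.1 k4).1, (abs_le.1 k4).2]
  have hgoal : a * x0 + b * x1 + c * x2 ≤ |a| * |x0| + |b| * |x1| + |c| * |x2| := by
    have e1 : a * x0 ≤ |a| * |x0| := by rw [← abs_mul]; exact le_abs_self _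
    have e2 : b * x1 ≤ |b| * |x1| := by rw [← abs_mul]; exact le_abs_self _
    have e3 : c * x2 ≤ |c| * |x2| := by rw [← abs_mul]; exact le_abs_self _
    linarith
  have hx0 : (0:ℝ) ≤ |x0| := abs_nonneg _
  have hx1 : (0:ℝ) ≤ |x1| := abs_nonneg _
  have hx2 : (0:ℝ) ≤ |x2| := abs_nonneg _
  rcases le_total (|x2|) M with hz | hz
  · nlinarith [mul_le_mul_of_nonneg_left k1 hA, mul_le_mul_of_nonneg_left k2 hB,
      mul_le_mul_of_nonneg_left hz hC, mul_le_mul_of_nonneg_right hABC hM0]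
  · have e1 : |a| * |x0| ≤ |a| * (2*M - |x2|) := mul_le_mul_of_nonneg_left (by linarith) hA
    have e2 : |b| * |x1| ≤ |b| * (2*M - |x2|) := by
      have hyz : |x1| + |x2| ≤ 2*M := by
        rcases abs_cases x1 with ⟨hx, _⟩ | ⟨hx, _⟩ <;>
          rcases abs_cases x2 with ⟨hzz, _⟩ | ⟨hzz, _⟩ <;> rw [hx, hzz] <;>
          linarith [(abs_le.1 k5).1, (abs_le.1 k5).2, (abs_le.1 k6).1, (abs_le.1 k6).2]
      exact mul_le_mul_of_nonneg_left (by linarith) hB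
    rcases le_total (|c|) (|a| + |b|) with hC1 | hC1
    · have e3 : 0 ≤ (|x2| - M) * (|a| + |b| - |c|) := mul_nonneg (by linarith) (by linarith)
      have e4 : (|a| + |b| + |c|) * M ≤ 1 * M := mul_le_mul_of_nonneg_right hABC hM0
      nlinarith
    · have hz2 : |x2| ≤ 2*M := by linarith
      have e3 : 0 ≤ (2*M - |x2|) * (|c| - |a| - |b|) := mul_nonneg (by linarith) (by linarith)
      have e4 : (2 * |c|) * M ≤ 1 * M := mul_le_mul_of_nonneg_right h2C hM0
      nlinarith

lemma Tv_bound (hball : closedBall (0 : X) 1 = e ⁻¹' (convexHull ℝ biPyramidVerts))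
    (T : X →L[ℝ] X) (ht0 : 0 ≤ nrad T) {u : Fin 3 → ℝ} (hu : u ∈ biPyramidVerts) :
    ‖T (e.symm u)‖ ≤ 2 * nrad T := by
  set y := T (e.symm u) with hy
  by_cases h0 : y = 0
  · rw [h0, norm_zero]; linarith
  obtain ⟨f, hf1, hfy⟩ := exists_dual_vector ℝ y (norm_ne_zero_iff.2 h0)
  set F : (Fin 3 → ℝ) →ₗ[ℝ] ℝ := (f : X →ₗ[ℝ] ℝ).comp e.symm.toLinearMap with hF
  have hFq : ∀ q : Fin 3 → ℝ, F q = f (e.symm q) := fun q => rfl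
  set a := F ![1,0,0] with ha
  set b := F ![0,1,0] with hb
  set c := F ![0,0,1] with hc
  have hexp : ∀ w : Fin 3 → ℝ, F w = w 0 * a + w 1 * b + w 2 * c := fun w => lin_expand F w
  have hFb : ∀ q ∈ biPyramidVerts, |F q| ≤ 1 := by
    intro q hq
    have hq1 : ‖e.symm q‖ ≤ 1 := by
      rw [norm_le_iff e hball]; simpa using vmem q hq
    calc |F q| = ‖f (e.symm q)‖ := by rw [hFq, Real.norm_eq_abs]
      _ ≤ ‖f‖ * ‖e.symm q‖ := f.le_opNorm _
      _ ≤ 1 := by rw [hf1]; linarith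
  have ent : ∀ (p q r : ℝ), (![p,q,r] : Fin 3 → ℝ) 0 = p ∧ (![p,q,r] : Fin 3 → ℝ) 1 = q ∧
      (![p,q,r] : Fin 3 → ℝ) 2 = r := by intro p q r; refine ⟨rfl, rfl, rfl⟩
  have h1 : |a + b + c| ≤ 1 := by
    have h := hFb ![1,1,1] (by simp [biPyramidVerts])
    rw [show F ![1,1,1] = a + b + c by rw [hexp, (ent 1 1 1).1, (ent 1 1 1).2.1, (ent 1 1 1).2.2]; ring] at h; exact h
  have h2 : |a - b + c| ≤ 1 := by
    have h := hFb ![1,-1,1] (by simp [biPyramidVerts])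
    rw [show F ![1,-1,1] = a - b + c by rw [hexp, (ent 1 (-1) 1).1, (ent 1 (-1) 1).2.1, (ent 1 (-1) 1).2.2]; ring] at h; exact h
  have h3 : |-a + b + c| ≤ 1 := by
    have h := hFb ![-1,1,1] (by simp [biPyramidVerts])
    rw [show F ![-1,1,1] = -a + b + c by rw [hexp, (ent (-1) 1 1).1, (ent (-1) 1 1).2.1, (ent (-1) 1 1).2.2]; ring] at h; exact h
  have h4 : |-a - b + c| ≤ 1 := by
    have h := hFb ![-1,-1,1] (by simp [biPyramidVerts])
    rw [show F ![-1,-1,1] = -a - b + c by rw [hexp, (ent (-1) (-1) 1).1, (ent (-1) (-1) 1).2.1, (ent (-1) (-1) 1).2.2]; ring] at h; exact h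
  have h5 : |2*c| ≤ 1 := by
    have h := hFb ![0,0,2] (by simp [biPyramidVerts])
    rw [show F ![0,0,2] = 2*c by rw [hexp, (ent 0 0 2).1, (ent 0 0 2).2.1, (ent 0 0 2).2.2]; ring] at h; exact h
  have hkb := key_bounds e hball T ht0 u hu
  set M := 2 * nrad T with hM
  have kb1 : |e y 0| ≤ M := by
    have h := hkb ![1,0,0] (by simp)
    rw [show gLin ![1,0,0] (e y) = e y 0 by
      rw [gLin_apply, (ent 1 0 0).1, (ent 1 0 0).2.1, (ent 1 0 0).2.2]; ring] at h
    exact h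
  have kb2 : |e y 1| ≤ M := by
    have h := hkb ![0,1,0] (by simp)
    rw [show gLin ![0,1,0] (e y) = e y 1 by
      rw [gLin_apply, (ent 0 1 0).1, (ent 0 1 0).2.1, (ent 0 1 0).2.2]; ring] at h
    exact h
  have kb3 : |e y 0 + e y 2| ≤ 2 * M := by
    have h := hkb ![1/2,0,1/2] (by simp)
    rw [show e y 0 + e y 2 = 2 * gLin ![1/2,0,1/2] (e y) by
      rw [gLin_apply, (ent (1/2) 0 (1/2)).1, (ent (1/2) 0 (1/2)).2.1,
        (ent (1/2) 0 (1/2)).2.2]; ring, abs_mul, show |(2:ℝ)| = 2 by norm_num]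
    linarith
  have kb4 : |e y 0 - e y 2| ≤ 2 * M := by
    have h := hkb ![1/2,0,-1/2] (by simp)
    rw [show e y 0 - e y 2 = 2 * gLin ![1/2,0,-1/2] (e y) by
      rw [gLin_apply, (ent (1/2) 0 (-1/2)).1, (ent (1/2) 0 (-1/2)).2.1,
        (ent (1/2) 0 (-1/2)).2.2]; ring, abs_mul, show |(2:ℝ)| = 2 by norm_num]
    linarith
  have kb5 : |e y 1 + e y 2| ≤ 2 * M := by
    have h := hkb ![0,1/2,1/2] (by simp)
    rw [show e y 1 + e y 2 = 2 * gLin ![0,1/2,1/2] (e y) by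
      rw [gLin_apply, (ent 0 (1/2) (1/2)).1, (ent 0 (1/2) (1/2)).2.1,
        (ent 0 (1/2) (1/2)).2.2]; ring, abs_mul, show |(2:ℝ)| = 2 by norm_num]
    linarith
  have kb6 : |e y 1 - e y 2| ≤ 2 * M := by
    have h := hkb ![0,1/2,-1/2] (by simp)
    rw [show e y 1 - e y 2 = 2 * gLin ![0,1/2,-1/2] (e y) by
      rw [gLin_apply, (ent 0 (1/2) (-1/2)).1, (ent 0 (1/2) (-1/2)).2.1,
        (ent 0 (1/2) (-1/2)).2.2]; ring, abs_mul, show |(2:ℝ)| = 2 by norm_num]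
    linarith
  have hfy' : f y = ‖y‖ := by exact_mod_cast hfy
  have hyv : ‖y‖ = a * (e y 0) + b * (e y 1) + c * (e y 2) := by
    have hFy : F (e y) = f y := by rw [hFq]; simp
    rw [← hfy', ← hFy, hexp]; ring
  rw [hyv]
  exact arith_key h1 h2 h3 h4 h5 kb1 kb2 kb3 kb4 kb5 kb6

lemma lower_half (hball : closedBall (0 : X) 1 = e ⁻¹' (convexHull ℝ biPyramidVerts))
    (T : X →L[ℝ] X) (hT : ‖T‖ = 1) : 1/2 ≤ nrad T := by
  have ht0 := nrad_nonneg e hball T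
  have hop : ‖T‖ ≤ 2 * nrad T := by
    apply ContinuousLinearMap.opNorm_le_of_unit_norm (by linarith)
    intro x hx
    have hxH : e x ∈ convexHull ℝ biPyramidVerts := (norm_le_iff e hball x).1 hx.le
    rw [mem_convexHull_iff_exists_fintype] at hxH
    obtain ⟨ι, hι, w, z, hw0, hw1, hzs, hzx⟩ := hxH
    have hxe : x = ∑ i, w i • e.symm (z i) := by
      apply e.injective
      rw [map_sum]
      simp only [map_smul, LinearEquiv.apply_symm_apply]
      exact hzx.symm
    calc ‖T x‖ = ‖∑ i, w i • T (e.symm (z i))‖ := by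
          rw [hxe, map_sum]; simp only [map_smul]
      _ ≤ ∑ i, ‖w i • T (e.symm (z i))‖ := norm_sum_le _ _
      _ ≤ ∑ i, w i * (2 * nrad T) := by
          apply Finset.sum_le_sum
          intro i _
          rw [norm_smul, Real.norm_eq_abs, abs_of_nonneg (hw0 i)]
          exact mul_le_mul_of_nonneg_left (Tv_bound e hball T ht0 (hzs i)) (hw0 i)
      _ = 2 * nrad T := by rw [← Finset.sum_mul, hw1, one_mul]
  rw [hT] at hop
  linarith

noncomputable def A0 : (Fin 3 → ℝ) →ₗ[ℝ] (Fin 3 → ℝ) where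
  toFun w := ![w 0 / 2, w 1 / 2, w 0 - w 2 / 2]
  map_add' u v := by funext i; fin_cases i <;> simp [Pi.add_apply] <;> ring
  map_smul' r v := by funext i; fin_cases i <;> simp [Pi.smul_apply, smul_eq_mul] <;> ring

@[simp] lemma A0_apply (w : Fin 3 → ℝ) : A0 w = ![w 0 / 2, w 1 / 2, w 0 - w 2 / 2] := rfl

lemma comb_mem {p q m : Fin 3 → ℝ} (hp : p ∈ convexHull ℝ biPyramidVerts)
    (hq : q ∈ convexHull ℝ biPyramidVerts) {s t : ℝ} (hs : 0 ≤ s) (ht : 0 ≤ t)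
    (hst : s + t = 1) (hm : m = s • p + t • q) : m ∈ convexHull ℝ biPyramidVerts := by
  rw [hm]
  exact (convex_convexHull ℝ biPyramidVerts) hp hq hs ht hst

lemma zero_mem : (0 : Fin 3 → ℝ) ∈ convexHull ℝ biPyramidVerts :=
  comb_mem (s := 1/2) (t := 1/2) (vmem ![1,1,1] (by simp [biPyramidVerts]))
    (vmem ![-1,-1,-1] (by simp [biPyramidVerts]))
    (by norm_num) (by norm_num) (by norm_num) (by funext i; fin_cases i <;> norm_num)

lemma A0_vert_mem : ∀ q ∈ biPyramidVerts, A0 q ∈ convexHull ℝ biPyramidVerts := by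
  intro q hq
  rcases mem_verts_cases hq with rfl|rfl|rfl|rfl|rfl|rfl|rfl|rfl|rfl|rfl
  · exact comb_mem (vmem ![1,1,1] (by simp [biPyramidVerts]))
      (vmem ![-1,-1,-1] (by simp [biPyramidVerts])) (by norm_num) (by norm_num) (by norm_num)
      (show A0 ![1,1,1] = (3/4 : ℝ) • ![1,1,1] + (1/4 : ℝ) • ![-1,-1,-1] by
        funext i; fin_cases i <;> norm_num)
  · exact comb_mem (vmem ![0,0,-2] (by simp [biPyramidVerts]))
      (vmem ![-1,1,-1] (by simp [biPyramidVerts])) (by norm_num) (by norm_num) (by norm_num)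
      (show A0 ![-1,1,1] = (1/2 : ℝ) • ![0,0,-2] + (1/2 : ℝ) • ![-1,1,-1] by
        funext i; fin_cases i <;> norm_num)
  · exact comb_mem (vmem ![0,0,-2] (by simp [biPyramidVerts]))
      (vmem ![-1,-1,-1] (by simp [biPyramidVerts])) (by norm_num) (by norm_num) (by norm_num)
      (show A0 ![-1,-1,1] = (1/2 : ℝ) • ![0,0,-2] + (1/2 : ℝ) • ![-1,-1,-1] by
        funext i; fin_cases i <;> norm_num)
  · exact comb_mem (vmem ![1,-1,1] (by simp [biPyramidVerts]))
      (vmem ![-1,1,-1] (by simp [biPyramidVerts])) (by norm_num) (by norm_num) (by norm_num)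
      (show A0 ![1,-1,1] = (3/4 : ℝ) • ![1,-1,1] + (1/4 : ℝ) • ![-1,1,-1] by
        funext i; fin_cases i <;> norm_num)
  · exact comb_mem (vmem ![0,0,-2] (by simp [biPyramidVerts])) zero_mem
      (by norm_num) (by norm_num) (by norm_num)
      (show A0 ![0,0,2] = (1/2 : ℝ) • ![0,0,-2] + (1/2 : ℝ) • (0 : Fin 3 → ℝ) by
        funext i; fin_cases i <;> norm_num)
  · exact comb_mem (vmem ![-1,-1,-1] (by simp [biPyramidVerts]))
      (vmem ![1,1,1] (by simp [biPyramidVerts])) (by norm_num) (by norm_num) (by norm_num)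
      (show A0 ![-1,-1,-1] = (3/4 : ℝ) • ![-1,-1,-1] + (1/4 : ℝ) • ![1,1,1] by
        funext i; fin_cases i <;> norm_num)
  · exact comb_mem (vmem ![0,0,2] (by simp [biPyramidVerts]))
      (vmem ![1,-1,1] (by simp [biPyramidVerts])) (by norm_num) (by norm_num) (by norm_num)
      (show A0 ![1,-1,-1] = (1/2 : ℝ) • ![0,0,2] + (1/2 : ℝ) • ![1,-1,1] by
        funext i; fin_cases i <;> norm_num)
  · exact comb_mem (vmem ![0,0,2] (by simp [biPyramidVerts]))
      (vmem ![1,1,1] (by simp [biPyramidVerts])) (by norm_num) (by norm_num) (by norm_num)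
      (show A0 ![1,1,-1] = (1/2 : ℝ) • ![0,0,2] + (1/2 : ℝ) • ![1,1,1] by
        funext i; fin_cases i <;> norm_num)
  · exact comb_mem (vmem ![-1,1,-1] (by simp [biPyramidVerts]))
      (vmem ![1,-1,1] (by simp [biPyramidVerts])) (by norm_num) (by norm_num) (by norm_num)
      (show A0 ![-1,1,-1] = (3/4 : ℝ) • ![-1,1,-1] + (1/4 : ℝ) • ![1,-1,1] by
        funext i; fin_cases i <;> norm_num)
  · exact comb_mem (vmem ![0,0,2] (by simp [biPyramidVerts])) zero_mem
      (by norm_num) (by norm_num) (by norm_num)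
      (show A0 ![0,0,-2] = (1/2 : ℝ) • ![0,0,2] + (1/2 : ℝ) • (0 : Fin 3 → ℝ) by
        funext i; fin_cases i <;> norm_num)

noncomputable def T0 (e : X ≃ₗ[ℝ] (Fin 3 → ℝ)) : X →L[ℝ] X :=
  LinearMap.toContinuousLinearMap ((e.symm.toLinearMap.comp A0).comp e.toLinearMap)

lemma T0_apply (x : X) : T0 e x = e.symm (A0 (e x)) := rfl

lemma T0_norm (hball : closedBall (0 : X) 1 = e ⁻¹' (convexHull ℝ biPyramidVerts)) :
    ‖T0 e‖ = 1 := by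
  have hup : ‖T0 e‖ ≤ 1 := by
    apply ContinuousLinearMap.opNorm_le_of_unit_norm (by norm_num)
    intro x hx
    rw [norm_le_iff e hball]
    have h1 : e (T0 e x) = A0 (e x) := by
      rw [T0_apply]; simp
    rw [h1]
    have hmin : convexHull ℝ biPyramidVerts ⊆ A0 ⁻¹' (convexHull ℝ biPyramidVerts) :=
      convexHull_min (fun q hq => A0_vert_mem q hq)
        ((convex_convexHull ℝ _).linear_preimage A0)
    exact hmin ((norm_le_iff e hball x).1 hx.le)
  refine le_antisymm hup ?_
  set x1 := e.symm ![-1,1,1] with hx1def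
  have hx1 : ‖x1‖ ≤ 1 := by
    rw [norm_le_iff e hball]
    simpa [hx1def] using vmem ![-1,1,1] (by simp [biPyramidVerts])
  set g : Fin 3 → ℝ := ![0,1/2,-1/2] with hgdef
  have hGle : ‖Gf e g‖ ≤ 1 := Gf_norm_le e hball gb_gf
  have hval : Gf e g (T0 e x1) = 1 := by
    rw [T0_apply]
    simp only [Gf_apply, LinearEquiv.apply_symm_apply, hx1def, hgdef]
    norm_num
  have h2 : |Gf e g (T0 e x1)| ≤ ‖Gf e g‖ * ‖T0 e x1‖ := by
    simpa [Real.norm_eq_abs] using (Gf e g).le_opNorm (T0 e x1)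
  have h3 : ‖T0 e x1‖ ≤ ‖T0 e‖ * ‖x1‖ := (T0 e).le_opNorm x1
  rw [hval, abs_one] at h2
  nlinarith [mul_le_mul_of_nonneg_right hGle (norm_nonneg (T0 e x1)),
    mul_le_mul_of_nonneg_left hx1 (norm_nonneg (T0 e))]

lemma nrad_T0_le (hball : closedBall (0 : X) 1 = e ⁻¹' (convexHull ℝ biPyramidVerts)) :
    nrad (T0 e) ≤ 1/2 := by
  apply Real.sSup_le _ (by norm_num)
  rintro r ⟨x, f, hx, hf, hfx, rfl⟩
  set F : (Fin 3 → ℝ) →ₗ[ℝ] ℝ := (f : X →ₗ[ℝ] ℝ).comp e.symm.toLinearMap with hFdef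
  have hFq : ∀ q : Fin 3 → ℝ, F q = f (e.symm q) := fun q => rfl
  set a := F ![1,0,0] with ha
  set b := F ![0,1,0] with hb
  set c := F ![0,0,1] with hc
  have hexp : ∀ w : Fin 3 → ℝ, F w = w 0 * a + w 1 * b + w 2 * c := fun w => lin_expand F w
  have ent : ∀ (p q r : ℝ), (![p,q,r] : Fin 3 → ℝ) 0 = p ∧ (![p,q,r] : Fin 3 → ℝ) 1 = q ∧
      (![p,q,r] : Fin 3 → ℝ) 2 = r := by intro p q r; exact ⟨rfl, rfl, rfl⟩
  have hFb : ∀ q ∈ biPyramidVerts, |F q| ≤ 1 := by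
    intro q hq
    have hq1 : ‖e.symm q‖ ≤ 1 := by
      rw [norm_le_iff e hball]; simpa using vmem q hq
    calc |F q| = ‖f (e.symm q)‖ := by rw [hFq, Real.norm_eq_abs]
      _ ≤ ‖f‖ * ‖e.symm q‖ := f.le_opNorm _
      _ ≤ 1 := by rw [hf]; linarith
  have h1 : |a + b + c| ≤ 1 := by
    have h := hFb ![1,1,1] (by simp [biPyramidVerts])
    rw [show F ![1,1,1] = a + b + c by rw [hexp, (ent 1 1 1).1, (ent 1 1 1).2.1, (ent 1 1 1).2.2]; ring] at h; exact h
  have h2 : |a - b + c| ≤ 1 := by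
    have h := hFb ![1,-1,1] (by simp [biPyramidVerts])
    rw [show F ![1,-1,1] = a - b + c by rw [hexp, (ent 1 (-1) 1).1, (ent 1 (-1) 1).2.1, (ent 1 (-1) 1).2.2]; ring] at h; exact h
  have h3 : |-a + b + c| ≤ 1 := by
    have h := hFb ![-1,1,1] (by simp [biPyramidVerts])
    rw [show F ![-1,1,1] = -a + b + c by rw [hexp, (ent (-1) 1 1).1, (ent (-1) 1 1).2.1, (ent (-1) 1 1).2.2]; ring] at h; exact h
  have h4 : |-a - b + c| ≤ 1 := by
    have h := hFb ![-1,-1,1] (by simp [biPyramidVerts])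
    rw [show F ![-1,-1,1] = -a - b + c by rw [hexp, (ent (-1) (-1) 1).1, (ent (-1) (-1) 1).2.1, (ent (-1) (-1) 1).2.2]; ring] at h; exact h
  have h5 : |2*c| ≤ 1 := by
    have h := hFb ![0,0,2] (by simp [biPyramidVerts])
    rw [show F ![0,0,2] = 2*c by rw [hexp, (ent 0 0 2).1, (ent 0 0 2).2.1, (ent 0 0 2).2.2]; ring] at h; exact h
  have hclaim : ∀ q ∈ biPyramidVerts, F q = 1 → |F (A0 q)| ≤ 1/2 := by
    intro q hq hq1
    rcases mem_verts_cases hq with rfl|rfl|rfl|rfl|rfl|rfl|rfl|rfl|rfl|rfl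
    · rw [show F ![1,1,1] = a + b + c by rw [hexp, (ent 1 1 1).1, (ent 1 1 1).2.1, (ent 1 1 1).2.2]; try ring] at hq1
      rw [show A0 ![1,1,1] = ![1/2,1/2,1/2] by funext i; fin_cases i <;> norm_num,
        show F ![1/2,1/2,1/2] = 1/2 * a + 1/2 * b + 1/2 * c by rw [hexp, (ent (1/2) (1/2) (1/2)).1, (ent (1/2) (1/2) (1/2)).2.1, (ent (1/2) (1/2) (1/2)).2.2]; try ring, abs_le]
      constructor <;>
        linarith [(abs_le.1 h1).1, (abs_le.1 h1).2, (abs_le.1 h2).1, (abs_le.1 h2).2,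
          (abs_le.1 h3).1, (abs_le.1 h3).2, (abs_le.1 h4).1, (abs_le.1 h4).2,
          (abs_le.1 h5).1, (abs_le.1 h5).2]
    · rw [show F ![-1,1,1] = -a + b + c by rw [hexp, (ent (-1) 1 1).1, (ent (-1) 1 1).2.1, (ent (-1) 1 1).2.2]; try ring] at hq1
      rw [show A0 ![-1,1,1] = ![-1/2,1/2,-3/2] by funext i; fin_cases i <;> norm_num,
        show F ![-1/2,1/2,-3/2] = -1/2 * a + 1/2 * b - 3/2 * c by rw [hexp, (ent (-1/2) (1/2) (-3/2)).1, (ent (-1/2) (1/2) (-3/2)).2.1, (ent (-1/2) (1/2) (-3/2)).2.2]; try ring, abs_le]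
      constructor <;>
        linarith [(abs_le.1 h1).1, (abs_le.1 h1).2, (abs_le.1 h2).1, (abs_le.1 h2).2,
          (abs_le.1 h3).1, (abs_le.1 h3).2, (abs_le.1 h4).1, (abs_le.1 h4).2,
          (abs_le.1 h5).1, (abs_le.1 h5).2]
    · rw [show F ![-1,-1,1] = -a - b + c by rw [hexp, (ent (-1) (-1) 1).1, (ent (-1) (-1) 1).2.1, (ent (-1) (-1) 1).2.2]; try ring] at hq1
      rw [show A0 ![-1,-1,1] = ![-1/2,-1/2,-3/2] by funext i; fin_cases i <;> norm_num,
        show F ![-1/2,-1/2,-3/2] = -1/2 * a - 1/2 * b - 3/2 * c by rw [hexp, (ent (-1/2) (-1/2) (-3/2)).1, (ent (-1/2) (-1/2) (-3/2)).2.1, (ent (-1/2) (-1/2) (-3/2)).2.2]; try ring, abs_le]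
      constructor <;>
        linarith [(abs_le.1 h1).1, (abs_le.1 h1).2, (abs_le.1 h2).1, (abs_le.1 h2).2,
          (abs_le.1 h3).1, (abs_le.1 h3).2, (abs_le.1 h4).1, (abs_le.1 h4).2,
          (abs_le.1 h5).1, (abs_le.1 h5).2]
    · rw [show F ![1,-1,1] = a - b + c by rw [hexp, (ent 1 (-1) 1).1, (ent 1 (-1) 1).2.1, (ent 1 (-1) 1).2.2]; try ring] at hq1
      rw [show A0 ![1,-1,1] = ![1/2,-1/2,1/2] by funext i; fin_cases i <;> norm_num,
        show F ![1/2,-1/2,1/2] = 1/2 * a - 1/2 * b + 1/2 * c by rw [hexp, (ent (1/2) (-1/2) (1/2)).1, (ent (1/2) (-1/2) (1/2)).2.1, (ent (1/2) (-1/2) (1/2)).2.2]; try ring, abs_le]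
      constructor <;>
        linarith [(abs_le.1 h1).1, (abs_le.1 h1).2, (abs_le.1 h2).1, (abs_le.1 h2).2,
          (abs_le.1 h3).1, (abs_le.1 h3).2, (abs_le.1 h4).1, (abs_le.1 h4).2,
          (abs_le.1 h5).1, (abs_le.1 h5).2]
    · rw [show F ![0,0,2] = 2 * c by rw [hexp, (ent 0 0 2).1, (ent 0 0 2).2.1, (ent 0 0 2).2.2]; try ring] at hq1
      rw [show A0 ![0,0,2] = ![0,0,-1] by funext i; fin_cases i <;> norm_num,
        show F ![0,0,-1] = -c by rw [hexp, (ent 0 0 (-1)).1, (ent 0 0 (-1)).2.1, (ent 0 0 (-1)).2.2]; try ring, abs_le]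
      constructor <;>
        linarith [(abs_le.1 h1).1, (abs_le.1 h1).2, (abs_le.1 h2).1, (abs_le.1 h2).2,
          (abs_le.1 h3).1, (abs_le.1 h3).2, (abs_le.1 h4).1, (abs_le.1 h4).2,
          (abs_le.1 h5).1, (abs_le.1 h5).2]
    · rw [show F ![-1,-1,-1] = -a - b - c by rw [hexp, (ent (-1) (-1) (-1)).1, (ent (-1) (-1) (-1)).2.1, (ent (-1) (-1) (-1)).2.2]; try ring] at hq1
      rw [show A0 ![-1,-1,-1] = ![-1/2,-1/2,-1/2] by funext i; fin_cases i <;> norm_num,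
        show F ![-1/2,-1/2,-1/2] = -1/2 * a - 1/2 * b - 1/2 * c by rw [hexp, (ent (-1/2) (-1/2) (-1/2)).1, (ent (-1/2) (-1/2) (-1/2)).2.1, (ent (-1/2) (-1/2) (-1/2)).2.2]; try ring, abs_le]
      constructor <;>
        linarith [(abs_le.1 h1).1, (abs_le.1 h1).2, (abs_le.1 h2).1, (abs_le.1 h2).2,
          (abs_le.1 h3).1, (abs_le.1 h3).2, (abs_le.1 h4).1, (abs_le.1 h4).2,
          (abs_le.1 h5).1, (abs_le.1 h5).2]
    · rw [show F ![1,-1,-1] = a - b - c by rw [hexp, (ent 1 (-1) (-1)).1, (ent 1 (-1) (-1)).2.1, (ent 1 (-1) (-1)).2.2]; try ring] at hq1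
      rw [show A0 ![1,-1,-1] = ![1/2,-1/2,3/2] by funext i; fin_cases i <;> norm_num,
        show F ![1/2,-1/2,3/2] = 1/2 * a - 1/2 * b + 3/2 * c by rw [hexp, (ent (1/2) (-1/2) (3/2)).1, (ent (1/2) (-1/2) (3/2)).2.1, (ent (1/2) (-1/2) (3/2)).2.2]; try ring, abs_le]
      constructor <;>
        linarith [(abs_le.1 h1).1, (abs_le.1 h1).2, (abs_le.1 h2).1, (abs_le.1 h2).2,
          (abs_le.1 h3).1, (abs_le.1 h3).2, (abs_le.1 h4).1, (abs_le.1 h4).2,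
          (abs_le.1 h5).1, (abs_le.1 h5).2]
    · rw [show F ![1,1,-1] = a + b - c by rw [hexp, (ent 1 1 (-1)).1, (ent 1 1 (-1)).2.1, (ent 1 1 (-1)).2.2]; try ring] at hq1
      rw [show A0 ![1,1,-1] = ![1/2,1/2,3/2] by funext i; fin_cases i <;> norm_num,
        show F ![1/2,1/2,3/2] = 1/2 * a + 1/2 * b + 3/2 * c by rw [hexp, (ent (1/2) (1/2) (3/2)).1, (ent (1/2) (1/2) (3/2)).2.1, (ent (1/2) (1/2) (3/2)).2.2]; try ring, abs_le]
      constructor <;>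
        linarith [(abs_le.1 h1).1, (abs_le.1 h1).2, (abs_le.1 h2).1, (abs_le.1 h2).2,
          (abs_le.1 h3).1, (abs_le.1 h3).2, (abs_le.1 h4).1, (abs_le.1 h4).2,
          (abs_le.1 h5).1, (abs_le.1 h5).2]
    · rw [show F ![-1,1,-1] = -a + b - c by rw [hexp, (ent (-1) 1 (-1)).1, (ent (-1) 1 (-1)).2.1, (ent (-1) 1 (-1)).2.2]; try ring] at hq1
      rw [show A0 ![-1,1,-1] = ![-1/2,1/2,-1/2] by funext i; fin_cases i <;> norm_num,
        show F ![-1/2,1/2,-1/2] = -1/2 * a + 1/2 * b - 1/2 * c by rw [hexp, (ent (-1/2) (1/2) (-1/2)).1, (ent (-1/2) (1/2) (-1/2)).2.1, (ent (-1/2) (1/2) (-1/2)).2.2]; try ring, abs_le]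
      constructor <;>
        linarith [(abs_le.1 h1).1, (abs_le.1 h1).2, (abs_le.1 h2).1, (abs_le.1 h2).2,
          (abs_le.1 h3).1, (abs_le.1 h3).2, (abs_le.1 h4).1, (abs_le.1 h4).2,
          (abs_le.1 h5).1, (abs_le.1 h5).2]
    · rw [show F ![0,0,-2] = -2 * c by rw [hexp, (ent 0 0 (-2)).1, (ent 0 0 (-2)).2.1, (ent 0 0 (-2)).2.2]; try ring] at hq1
      rw [show A0 ![0,0,-2] = ![0,0,1] by funext i; fin_cases i <;> norm_num,
        show F ![0,0,1] = c by rw [hexp, (ent 0 0 1).1, (ent 0 0 1).2.1, (ent 0 0 1).2.2]; try ring, abs_le]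
      constructor <;>
        linarith [(abs_le.1 h1).1, (abs_le.1 h1).2, (abs_le.1 h2).1, (abs_le.1 h2).2,
          (abs_le.1 h3).1, (abs_le.1 h3).2, (abs_le.1 h4).1, (abs_le.1 h4).2,
          (abs_le.1 h5).1, (abs_le.1 h5).2]
  have hxH := (norm_le_iff e hball x).1 hx.le
  rw [mem_convexHull_iff_exists_fintype] at hxH
  obtain ⟨ι, hι, w, z, hw0, hw1, hzs, hzx⟩ := hxH
  have hzF : ∀ i, F (z i) ≤ 1 := fun i => le_trans (le_abs_self _) (hFb _ (hzs i))
  have hx2 : x = ∑ i, w i • e.symm (z i) := by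
    apply e.injective
    rw [map_sum]
    simp only [map_smul, LinearEquiv.apply_symm_apply]
    exact hzx.symm
  have hsum1 : ∑ i, w i * F (z i) = 1 := by
    have hfx2 : f x = ∑ i, w i * F (z i) := by
      rw [hx2, map_sum]
      refine Finset.sum_congr rfl fun i _ => ?_
      rw [map_smul, smul_eq_mul, hFq]
    rw [← hfx2, hfx]
  have hzero : ∀ i ∈ Finset.univ, w i * (1 - F (z i)) = 0 := by
    apply (Finset.sum_eq_zero_iff_of_nonneg
      (fun i _ => mul_nonneg (hw0 i) (by linarith [hzF i]))).1
    have : ∀ i, w i * (1 - F (z i)) = w i - w i * F (z i) := fun i => by ring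
    simp only [this]
    rw [Finset.sum_sub_distrib, hw1, hsum1]
    ring
  have hterm : ∀ i, w i * |F (A0 (z i))| ≤ w i * (1/2) := by
    intro i
    rcases eq_or_lt_of_le (hw0 i) with h|h
    · rw [← h]; simp
    · have hz1 : F (z i) = 1 := by
        have h0 := hzero i (Finset.mem_univ i)
        rcases mul_eq_zero.1 h0 with h'|h'
        · exact absurd h' h.ne'
        · linarith
      exact mul_le_mul_of_nonneg_left (hclaim _ (hzs i) hz1) (hw0 i)
  have hfT : f (T0 e x) = ∑ i, w i * F (A0 (z i)) := by
    have h1' : f (T0 e x) = F (A0 (e x)) := by rw [T0_apply, hFq]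
    rw [h1', ← hzx, map_sum]
    rw [map_sum]
    refine Finset.sum_congr rfl fun i _ => ?_
    rw [map_smul, map_smul, smul_eq_mul]
  calc |f (T0 e x)| = |∑ i, w i * F (A0 (z i))| := by rw [hfT]
    _ ≤ ∑ i, |w i * F (A0 (z i))| := Finset.abs_sum_le_sum_abs _ _
    _ = ∑ i, w i * |F (A0 (z i))| :=
        Finset.sum_congr rfl fun i _ => by rw [abs_mul, abs_of_nonneg (hw0 i)]
    _ ≤ ∑ i, w i * (1/2) := Finset.sum_le_sum (fun i _ => hterm i)
    _ = 1/2 := by rw [← Finset.sum_mul, hw1, one_mul]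

end S11

theorem stmt_11 {X : Type*} [NormedAddCommGroup X] [NormedSpace ℝ X]
    (e : X ≃ₗ[ℝ] (Fin 3 → ℝ))
    (hball : closedBall (0 : X) 1 = e ⁻¹' (convexHull ℝ biPyramidVerts)) :
    nindex X = 1 / 2 := by
  haveI : FiniteDimensional ℝ X := e.symm.finiteDimensional
  have hmem : nrad (S11.T0 e) ∈ {r : ℝ | ∃ T : X →L[ℝ] X, ‖T‖ = 1 ∧ r = nrad T} :=
    ⟨S11.T0 e, S11.T0_norm e hball, rfl⟩
  have hbdd : BddBelow {r : ℝ | ∃ T : X →L[ℝ] X, ‖T‖ = 1 ∧ r = nrad T} := by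
    refine ⟨0, ?_⟩
    rintro r ⟨T, hT, rfl⟩
    exact S11.nrad_nonneg e hball T
  unfold nindex
  refine le_antisymm ?_ ?_
  · exact le_trans (csInf_le hbdd hmem) (by simpa using S11.nrad_T0_le e hball)
  · refine le_csInf ⟨_, hmem⟩ ?_
    rintro r ⟨T, hT, rfl⟩
    exact (by norm_num : (1:ℝ)/2 ≤ 1/2).trans (S11.lower_half e hball T hT)
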